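/- arXiv:1705.05484 — 7 statements merged into one kernel-verified Lean document; each statement's English description precedes it below -/
import Mathlib

section
/- The intersection of two big subsets of D^{<ℕ} is big, and any superset of a big set is big. -/
variable {D : Type*} [Preorder D] [IsDirected D (· ≤ ·)] [Nonempty D]

/-- A subset of a directed set is cofinal if every element has an upper bound in it. -/
def Cofinal (S : Set D) : Prop := ∀ u : D, ∃ v ∈ S, u ≤ v

/-- A subset is eventual if its complement is not cofinal. -/
def Eventual (S : Set D) : Prop := ¬ Cofinal Sᶜ

/-- Inevitable subsets of the tree of nonempty finite sequences from `D`. -/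
def Inevitable (B : Set (List D)) : Prop :=
  Eventual {u : D | [u] ∈ B} ∧
    ∀ t ∈ B, t ≠ [] → Eventual {u : D | t ++ [u] ∈ B}

/-- A set of finite sequences is big if it contains an inevitable subset. -/
def Big (B : Set (List D)) : Prop := ∃ B' : Set (List D), B' ⊆ B ∧ Inevitable B'

section Eventual

variable {α : Type*} [Preorder α] {S T : Set α}

theorem Cofinal.mono (h : S ⊆ T) (hS : Cofinal S) : Cofinal T :=
  fun u => (hS u).imp fun _ hv => ⟨h hv.1, hv.2⟩

theorem Eventual.mono (h : S ⊆ T) (hS : Eventual S) : Eventual T :=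
  fun hT => hS (hT.mono (Set.compl_subset_compl.2 h))

theorem eventual_iff_exists_forall_ge : Eventual S ↔ ∃ u, ∀ v, u ≤ v → v ∈ S := by
  simp only [Eventual, Cofinal, Set.mem_compl_iff, not_forall, not_exists, not_and]
  exact exists_congr fun _ => forall_congr' fun _ => not_imp_not

theorem Eventual.inter [IsDirected α (· ≤ ·)] (hS : Eventual S) (hT : Eventual T) :
    Eventual (S ∩ T) := by
  obtain ⟨u, hu⟩ := eventual_iff_exists_forall_ge.1 hS
  obtain ⟨w, hw⟩ := eventual_iff_exists_forall_ge.1 hT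
  obtain ⟨z, huz, hwz⟩ := directed_of (· ≤ ·) u w
  exact eventual_iff_exists_forall_ge.2
    ⟨z, fun v hzv => ⟨hu v (huz.trans hzv), hw v (hwz.trans hzv)⟩⟩

end Eventual

section Big

variable {α : Type*} [Preorder α] [IsDirected α (· ≤ ·)] {A B C : Set (List α)}

theorem Inevitable.inter (hA : Inevitable A) (hB : Inevitable B) : Inevitable (A ∩ B) :=
  ⟨hA.1.inter hB.1, fun t ht hne => (hA.2 t ht.1 hne).inter (hB.2 t ht.2 hne)⟩

theorem Big.inter (hA : Big A) (hB : Big B) : Big (A ∩ B) := by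
  obtain ⟨A', hA'A, hA'⟩ := hA
  obtain ⟨B', hB'B, hB'⟩ := hB
  exact ⟨A' ∩ B', Set.inter_subset_inter hA'A hB'B, hA'.inter hB'⟩

end Big

theorem Big.mono {α : Type*} [Preorder α] {B C : Set (List α)} (h : B ⊆ C) (hB : Big B) :
    Big C := by
  obtain ⟨B', hB'B, hB'⟩ := hB
  exact ⟨B', hB'B.trans h, hB'⟩

/-- The intersection of two big subsets of `D^{<ℕ}` is big, and any superset of a
big set is big. -/
theorem big_inter_and_big_superset (B₁ B₂ C : Set (List D)) (h₁ : Big B₁)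
    (h₂ : Big B₂) (hC : B₁ ⊆ C) : Big (B₁ ∩ B₂) ∧ Big C :=
  ⟨h₁.inter h₂, h₁.mono hC⟩
end

section
/- For a downward closed B ⊆ D^{<ℕ}, either Player II has a winning strategy in the B game or Player I has a defensive (hence winning) strategy; in particular, the B game is determined. -/
variable {D : Type*} [Preorder D] [IsDirected D (· ≤ ·)] [Nonempty D]

/-- `B` is downward closed if it contains the nonempty initial segments of its members. -/
def DownwardClosed (B : Set (List D)) : Prop :=
  ∀ s t : List D, s ≠ [] → s <+: t → t ∈ B → s ∈ B

/-- The finite sequence of the first `n` values of `v`. -/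
def pfx (v : ℕ → D) (n : ℕ) : List D := List.ofFn fun i : Fin n => v i

/-- A strategy for Player I is a function from finite sequences of Player II's
previous moves to `D`. The sequence `(v_i)` of Player II's moves is `φ`-admissible up
to `n` if `φ` applied to each proper initial segment of length `j < n` is `≤ v_{j+1}`. -/
def IAdmissible (φ : List D → D) (v : ℕ → D) (n : ℕ) : Prop :=
  ∀ j : ℕ, j < n → φ (pfx v j) ≤ v j

/-- `φ` is a winning strategy for Player I in the `B` game if every infinite
`φ`-admissible sequence of moves of Player II has all of its nonempty initial
segments in `B`. -/
def IWinning (φ : List D → D) (B : Set (List D)) : Prop :=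
  ∀ v : ℕ → D, (∀ j : ℕ, φ (pfx v j) ≤ v j) → ∀ n : ℕ, pfx v (n + 1) ∈ B

/-- The shifted game: positions `s` with `t ++ s ∈ B`. -/
def shiftGame (B : Set (List D)) (t : List D) : Set (List D) := {s | t ++ s ∈ B}

/-- Player II has a winning strategy in the `B` game: a function `ψ` assigning to each
finite record of previous pairs of moves and each Player I move `u` a response
`v ≥ u`, such that every play according to `ψ` has some nonempty initial segment
outside `B`. -/
def IIHasWinning (B : Set (List D)) : Prop :=
  ∃ ψ : List (D × D) → D → D, (∀ l u, u ≤ ψ l u) ∧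
    ∀ u v : ℕ → D,
      (∀ n : ℕ, v n = ψ (List.ofFn fun i : Fin n => (u i, v i)) (u n)) →
      ∃ n : ℕ, pfx v (n + 1) ∉ B

/-- `φ` is a defensive strategy for Player I in the `B` game if at every position
reachable by a `φ`-admissible sequence of Player II moves, Player II has no winning
strategy in the corresponding shifted game. -/
def IDefensive (φ : List D → D) (B : Set (List D)) : Prop :=
  ∀ (v : ℕ → D) (n : ℕ), IAdmissible φ v n → ¬ IIHasWinning (shiftGame B (pfx v n))

/-!
If Player II has no winning strategy from a position, then Player I has a move `u` such
that Player II has no winning strategy after any answer `w ≥ u`: otherwise Player II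
could answer every `u` by a suitable `w` and then play a winning strategy of the shifted
game. Choosing such a move at every position gives a defensive strategy for Player I.
A defensive strategy is winning when `B` is downward closed, because a play that has
left `B` stays outside it, so Player II wins trivially from there.
-/

section Plays

variable {α : Type*}

theorem pfx_succ (v : ℕ → α) (n : ℕ) : pfx v (n + 1) = pfx v n ++ [v n] :=
  List.ofFn_succ_last

theorem pfx_succ' (v : ℕ → α) (n : ℕ) : pfx v (n + 1) = v 0 :: pfx (fun i => v (i + 1)) n :=
  List.ofFn_succ

theorem pfx_succ_ne_nil (v : ℕ → α) (n : ℕ) : pfx v (n + 1) ≠ [] := by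
  simp [pfx_succ]

theorem shiftGame_shiftGame (B : Set (List α)) (s t : List α) :
    shiftGame (shiftGame B s) t = shiftGame B (s ++ t) := by
  ext r
  simp [shiftGame, List.append_assoc]

end Plays

section Strategies

variable {α : Type*} [Preorder α]

theorem IIHasWinning.of_forall_exists_le_shiftGame {C : Set (List α)}
    (h : ∀ u, ∃ w, u ≤ w ∧ IIHasWinning (shiftGame C [w])) : IIHasWinning C := by
  choose f hf ψ hψ using h
  refine ⟨fun l u => match l with | [] => f u | p :: l' => ψ p.1 l' u, ?_, ?_⟩
  · rintro (_ | ⟨p, l'⟩) u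
    · exact hf u
    · exact (hψ p.1).1 l' u
  · intro u v hplay
    have hv0 : v 0 = f (u 0) := hplay 0
    have hplay_tail : ∀ n, v (n + 1) =
        ψ (u 0) (List.ofFn fun i : Fin n => (u (i + 1), v (i + 1))) (u (n + 1)) := by
      intro n
      simpa [List.ofFn_succ, Fin.val_succ] using hplay (n + 1)
    obtain ⟨m, hm⟩ := (hψ (u 0)).2 (fun n => u (n + 1)) (fun n => v (n + 1)) hplay_tail
    refine ⟨m + 1, fun hmem => hm ?_⟩
    rwa [← hv0, shiftGame, Set.mem_ofPred_eq, List.singleton_append, ← pfx_succ']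

theorem exists_IDefensive_of_not_IIHasWinning [Nonempty α] {B : Set (List α)}
    (hII : ¬ IIHasWinning B) : ∃ φ : List α → α, IDefensive φ B := by
  have hstep : ∀ s, ∃ u, ¬ IIHasWinning (shiftGame B s) →
      ∀ w, u ≤ w → ¬ IIHasWinning (shiftGame B (s ++ [w])) := by
    intro s
    by_cases hs : IIHasWinning (shiftGame B s)
    · exact ⟨Classical.arbitrary α, fun h => (h hs).elim⟩
    · by_contra! hcon
      refine hs (IIHasWinning.of_forall_exists_le_shiftGame fun u => ?_)
      obtain ⟨-, w, huw, hw⟩ := hcon u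
      exact ⟨w, huw, by rwa [shiftGame_shiftGame]⟩
  choose φ hφ using hstep
  refine ⟨φ, fun v n hadm => ?_⟩
  induction n with
  | zero => exact hII
  | succ n ih =>
    rw [pfx_succ]
    exact hφ _ (ih fun j hj => hadm j (by omega)) _ (hadm n n.lt_succ_self)

theorem IIHasWinning_shiftGame_of_notMem {B : Set (List α)} (hB : DownwardClosed B)
    {t : List α} (ht : t ≠ []) (htB : t ∉ B) : IIHasWinning (shiftGame B t) :=
  ⟨fun _ u => u, fun _ _ => le_rfl,
    fun _ v _ => ⟨0, fun hmem => htB (hB t _ ht ⟨pfx v 1, rfl⟩ hmem)⟩⟩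

theorem IDefensive.iWinning {B : Set (List α)} (hB : DownwardClosed B) {φ : List α → α}
    (hφ : IDefensive φ B) : IWinning φ B := by
  intro v hadm n
  by_contra hnB
  exact hφ v (n + 1) (fun j _ => hadm j)
    (IIHasWinning_shiftGame_of_notMem hB (pfx_succ_ne_nil v n) hnB)

end Strategies

/-- For a downward closed `B ⊆ D^{<ℕ}`, either Player II has a winning strategy in
the `B` game, or Player I has a defensive (hence winning) strategy; in particular the
`B` game is determined. -/
theorem game_determined (B : Set (List D)) (hB : DownwardClosed B) :
    IIHasWinning B ∨ ∃ φ : List D → D, IDefensive φ B ∧ IWinning φ B := by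
  refine (em (IIHasWinning B)).imp_right fun hII => ?_
  obtain ⟨φ, hφ⟩ := exists_IDefensive_of_not_IIHasWinning hII
  exact ⟨φ, hφ, hφ.iWinning hB⟩
end

section
/- For a downward closed subset B of D^{<ℕ}, Player I has a winning strategy in the B game if and only if B is big. -/
/-!
If `φ` is winning for Player I, the nonempty positions consistent with `φ` form an inevitable
subset of `B`: above `φ t` every move keeps a position consistent, and a consistent position is
an initial segment of an infinite `φ`-play (let Player II copy `φ` from then on), so it lies in `B`.
Conversely, if `B' ⊆ B` is inevitable, Player I answers a position `t` with a bound beyond which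
every `t ++ [u]` is in `B'`; by induction every play against this strategy stays in `B'`.
-/

variable {D : Type*} [Preorder D] [IsDirected D (· ≤ ·)] [Nonempty D]

section Game

variable {α : Type*}

theorem eventual_iff_exists_forall_le [Preorder α] {S : Set α} :
    Eventual S ↔ ∃ u, ∀ v, u ≤ v → v ∈ S := by
  simp only [Eventual, Cofinal, Set.mem_compl_iff, not_forall, not_exists, not_and]
  exact exists_congr fun u => forall_congr' fun v => by tauto

noncomputable def eventualBound [Preorder α] [Nonempty α] (S : Set α) : α :=
  Classical.epsilon fun u => ∀ v, u ≤ v → v ∈ S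

theorem Eventual.mem_of_eventualBound_le [Preorder α] [Nonempty α] {S : Set α} (hS : Eventual S)
    {v : α} (hv : eventualBound S ≤ v) : v ∈ S :=
  Classical.epsilon_spec (p := fun u => ∀ v, u ≤ v → v ∈ S)
    (eventual_iff_exists_forall_le.mp hS) v hv

theorem IWinning.mono [Preorder α] {φ : List α → α} {B B' : Set (List α)} (hφ : IWinning φ B')
    (hB : B' ⊆ B) : IWinning φ B :=
  fun v hv n => hB (hφ v hv n)

noncomputable def boundStrategy [Preorder α] [Nonempty α] (B : Set (List α)) (t : List α) : α :=
  eventualBound {u | t ++ [u] ∈ B}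

theorem Inevitable.iWinning_boundStrategy [Preorder α] [Nonempty α] {B : Set (List α)}
    (hB : Inevitable B) : IWinning (boundStrategy B) B := by
  intro v hv n
  induction n with
  | zero =>
    have h₀ : Eventual {u | [] ++ [u] ∈ B} := by simpa using hB.1
    exact h₀.mem_of_eventualBound_le (hv 0)
  | succ n ih =>
    rw [pfx_succ]
    exact (hB.2 _ ih (pfx_succ_ne_nil v n)).mem_of_eventualBound_le (hv (n + 1))

/-- The finite-position counterpart of `IAdmissible`. -/
def Consistent [Preorder α] (φ : List α → α) (t : List α) : Prop :=
  ∀ j (hj : j < t.length), φ (t.take j) ≤ t[j]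

theorem consistent_append_singleton [Preorder α] {φ : List α → α} {t : List α} {u : α} :
    Consistent φ (t ++ [u]) ↔ Consistent φ t ∧ φ t ≤ u := by
  have prefix_step : ∀ j (hj : j < t.length),
      φ ((t ++ [u]).take j) ≤ (t ++ [u])[j]'(by simp; omega) ↔ φ (t.take j) ≤ t[j] := by
    intro j hj
    rw [List.take_append_of_le_length hj.le, List.getElem_append_left hj]
  constructor
  · intro h
    exact ⟨fun j hj => (prefix_step j hj).mp (h j _), by simpa using h t.length (by simp)⟩
  · rintro ⟨ht, hu⟩ j hj
    rcases Nat.lt_succ_iff_lt_or_eq.mp (by simpa using hj) with hj | rfl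
    · exact (prefix_step j hj).mpr (ht j hj)
    · simpa using hu

def extendPlay (φ : List α → α) (t : List α) (n : ℕ) : α :=
  if h : n < t.length then t[n] else φ (List.ofFn fun i : Fin n => extendPlay φ t i)
termination_by n
decreasing_by exact i.isLt

theorem extendPlay_of_lt (φ : List α → α) (t : List α) {n : ℕ} (hn : n < t.length) :
    extendPlay φ t n = t[n] := by
  rw [extendPlay, dif_pos hn]

theorem extendPlay_of_length_le (φ : List α → α) (t : List α) {n : ℕ} (hn : t.length ≤ n) :
    extendPlay φ t n = φ (pfx (extendPlay φ t) n) := by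
  rw [extendPlay, dif_neg (by omega)]
  rfl

theorem pfx_extendPlay_of_le (φ : List α → α) (t : List α) {k : ℕ} (hk : k ≤ t.length) :
    pfx (extendPlay φ t) k = t.take k := by
  apply List.ext_getElem (by simp [pfx, hk])
  intro i hi _
  simp only [pfx, List.getElem_ofFn, List.getElem_take]
  exact extendPlay_of_lt φ t _

theorem Consistent.extendPlay [Preorder α] {φ : List α → α} {t : List α} (ht : Consistent φ t)
    (j : ℕ) : φ (pfx (extendPlay φ t) j) ≤ extendPlay φ t j := by
  rcases lt_or_ge j t.length with hj | hj
  · rw [pfx_extendPlay_of_le φ t hj.le, extendPlay_of_lt φ t hj]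
    exact ht j hj
  · rw [extendPlay_of_length_le φ t hj]

theorem IWinning.mem_of_consistent [Preorder α] {φ : List α → α} {B : Set (List α)}
    (hφ : IWinning φ B) {t : List α} (hne : t ≠ []) (ht : Consistent φ t) : t ∈ B := by
  obtain ⟨n, hn⟩ := Nat.exists_eq_add_one.mpr (List.length_pos_iff.mpr hne)
  have h := hφ _ ht.extendPlay n
  rwa [← hn, pfx_extendPlay_of_le φ t le_rfl, List.take_length] at h

theorem inevitable_consistent [Preorder α] (φ : List α → α) :
    Inevitable {t | t ≠ [] ∧ Consistent φ t} := by
  have extend : ∀ t, Consistent φ t → Eventual {u | t ++ [u] ≠ [] ∧ Consistent φ (t ++ [u])} :=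
    fun t ht => eventual_iff_exists_forall_le.mpr
      ⟨φ t, fun u hu => ⟨by simp, consistent_append_singleton.mpr ⟨ht, hu⟩⟩⟩
  exact ⟨by simpa using extend [] (by simp [Consistent]), fun t ht _ => extend t ht.2⟩

end Game

theorem winning_iff_big_general (B : Set (List D)) :
    (∃ φ : List D → D, IWinning φ B) ↔ Big B := by
  constructor
  · rintro ⟨φ, hφ⟩
    exact ⟨_, fun t ht => hφ.mem_of_consistent ht.1 ht.2, inevitable_consistent φ⟩
  · rintro ⟨B', hB'B, hB'⟩
    exact ⟨_, hB'.iWinning_boundStrategy.mono hB'B⟩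

/-- For a downward closed `B ⊆ D^{<ℕ}`, Player I has a winning strategy in the `B`
game if and only if `B` is big. -/
theorem winning_iff_big (B : Set (List D)) (hB : DownwardClosed B) :
    (∃ φ : List D → D, IWinning φ B) ↔ Big B :=
  winning_iff_big_general B
end

section
/- Let A : X → Y be a bounded operator between Banach spaces, 1 < p < ∞, G ⊆ B_Y with closed convex hull of G equal to B_Y, and C, σ > 0. If for every y ∈ G and every weakly null net (x_λ) in σB_X one has limsup_λ ‖y + Ax_λ‖ ≤ 1 + Cσ^p, then ρ(σ, A) ≤ Cσ^p, where ρ(σ, A) = sup{ limsup_λ ‖y + Ax_λ‖ − 1 : y ∈ B_Y, (x_λ) ⊆ σB_X weakly null }. -/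
open Filter
open scoped Classical

/-- A net in `X`: a function to `X` from a nonempty directed preorder. -/
structure Net (X : Type*) where
  ι : Type
  pre : Preorder ι
  dir : IsDirected ι fun a b => pre.le a b
  ne : Nonempty ι
  toFun : ι → X

/-- The `atTop` filter of the index set of a net, along which limits are taken. -/
def Net.F {X : Type*} (N : Net X) : Filter N.ι := @Filter.atTop _ N.pre

variable {X Y : Type*} [NormedAddCommGroup X] [NormedSpace ℝ X]
  [NormedAddCommGroup Y] [NormedSpace ℝ Y]

/-- A net in a normed space is weakly null if it converges to `0` in the weak topology,
i.e. `f (x_λ) → 0` for every continuous linear functional `f`. -/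
def WeaklyNullNet (N : Net X) : Prop :=
  ∀ f : X →L[ℝ] ℝ, Tendsto (fun i => f (N.toFun i)) N.F (nhds 0)

/-- The net takes values in the ball of radius `σ`. -/
def NetInBall (N : Net X) (σ : ℝ) : Prop := ∀ i, ‖N.toFun i‖ ≤ σ

/-- The modulus of asymptotic uniform smoothness of an operator `A : X → Y`:
`ρ(σ, A) = sup { limsup_λ ‖y + A x_λ‖ - 1 }` over `y ∈ B_Y` and weakly null nets
`(x_λ) ⊆ σ B_X`, with `ρ(σ, A) = 0` for the zero operator. -/
noncomputable def rho (A : X →L[ℝ] Y) (σ : ℝ) : ℝ :=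
  if A = 0 then 0 else
    sSup {r : ℝ | ∃ (N : Net X) (y : Y), ‖y‖ ≤ 1 ∧ NetInBall N σ ∧ WeaklyNullNet N ∧
      r = Filter.limsup (fun i => ‖y + A (N.toFun i)‖) N.F - 1}

/-!
For a bounded net `vᵢ`, the function `z ↦ limsup ‖z + vᵢ‖` is convex and `1`-Lipschitz, so each of
its sublevel sets is closed and convex. The sublevel set at `1 + Cσ^p` of the net `A xᵢ` contains
`G`, hence its closed convex hull, which is the unit ball.
-/

lemma Net.neBot_F {X : Type*} (N : Net X) : N.F.NeBot :=
  letI := N.pre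
  atTop_neBot_iff.mpr ⟨N.ne, N.dir⟩

lemma Filter.limsup_const_mul_of_nonneg {ι : Type*} {F : Filter ι} [F.NeBot] {u : ι → ℝ}
    (hbdd : F.IsBoundedUnder (· ≤ ·) u) (hcobdd : F.IsCoboundedUnder (· ≤ ·) u)
    {a : ℝ} (ha : 0 ≤ a) :
    limsup (fun i => a * u i) F = a * limsup u F :=
  (Monotone.map_limsSup_of_continuousAt (F := F.map u) (f := fun x : ℝ => a * x)
    (fun _ _ h => mul_le_mul_of_nonneg_left h ha) (continuous_const_mul a).continuousAt
    hbdd hcobdd).symm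

section LimsupNormAdd

variable {ι E : Type*} [SeminormedAddCommGroup E] {F : Filter ι} {v : ι → E}

lemma isBoundedUnder_norm_add (hv : F.IsBoundedUnder (· ≤ ·) (‖v ·‖)) (z : E) :
    F.IsBoundedUnder (· ≤ ·) (fun i => ‖z + v i‖) := by
  obtain ⟨R, hR⟩ := hv.eventually_le
  refine isBoundedUnder_of_eventually_le (a := ‖z‖ + R) ?_
  filter_upwards [hR] with i hi
  exact (norm_add_le _ _).trans (by gcongr)

lemma isCoboundedUnder_norm_add [F.NeBot] (z : E) :
    F.IsCoboundedUnder (· ≤ ·) (fun i => ‖z + v i‖) :=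
  isCoboundedUnder_le_of_le F fun _ => norm_nonneg _

lemma limsup_norm_add_le_add_dist [F.NeBot] (hv : F.IsBoundedUnder (· ≤ ·) (‖v ·‖)) (z w : E) :
    limsup (fun i => ‖z + v i‖) F ≤ limsup (fun i => ‖w + v i‖) F + dist z w := by
  rw [add_comm, dist_eq_norm, ← limsup_const_add F _ _ (isBoundedUnder_norm_add hv w)
    (isCoboundedUnder_norm_add w)]
  refine limsup_le_limsup (Eventually.of_forall fun i => ?_) (isCoboundedUnder_norm_add z)
    (isBoundedUnder_le_add isBoundedUnder_const (isBoundedUnder_norm_add hv w))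
  calc ‖z + v i‖ = ‖(z - w) + (w + v i)‖ := by rw [← add_assoc, sub_add_cancel]
    _ ≤ ‖z - w‖ + ‖w + v i‖ := norm_add_le _ _

lemma lipschitzWith_limsup_norm_add [F.NeBot] (hv : F.IsBoundedUnder (· ≤ ·) (‖v ·‖)) :
    LipschitzWith 1 fun z : E => limsup (fun i => ‖z + v i‖) F :=
  LipschitzWith.of_le_add (limsup_norm_add_le_add_dist hv)

lemma convexOn_limsup_norm_add [F.NeBot] [NormedSpace ℝ E]
    (hv : F.IsBoundedUnder (· ≤ ·) (‖v ·‖)) :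
    ConvexOn ℝ Set.univ fun z : E => limsup (fun i => ‖z + v i‖) F := by
  refine ⟨convex_univ, fun z _ w _ a b ha hb hab => ?_⟩
  have hbdd := isBoundedUnder_norm_add hv
  have hcobdd := isCoboundedUnder_norm_add (F := F) (v := v)
  have hpointwise : ∀ i, ‖a • z + b • w + v i‖ ≤ a * ‖z + v i‖ + b * ‖w + v i‖ := fun i => by
    calc ‖a • z + b • w + v i‖ = ‖a • (z + v i) + b • (w + v i)‖ := by
          rw [smul_add, smul_add, add_add_add_comm, ← add_smul, hab, one_smul]
      _ ≤ a * ‖z + v i‖ + b * ‖w + v i‖ := by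
          rw [← norm_smul_of_nonneg ha, ← norm_smul_of_nonneg hb]
          exact norm_add_le _ _
  have hbdd_a := isBoundedUnder_le_mul_of_nonneg (Frequently.of_forall fun _ => ha)
    (isBoundedUnder_const (a := a)) (Eventually.of_forall fun _ => norm_nonneg _) (hbdd z)
  have hbdd_b := isBoundedUnder_le_mul_of_nonneg (Frequently.of_forall fun _ => hb)
    (isBoundedUnder_const (a := b)) (Eventually.of_forall fun _ => norm_nonneg _) (hbdd w)
  calc limsup (fun i => ‖a • z + b • w + v i‖) F
      ≤ limsup (fun i => a * ‖z + v i‖ + b * ‖w + v i‖) F :=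
        limsup_le_limsup (Eventually.of_forall hpointwise) (hcobdd _)
          (isBoundedUnder_le_add hbdd_a hbdd_b)
    _ ≤ limsup (fun i => a * ‖z + v i‖) F + limsup (fun i => b * ‖w + v i‖) F :=
        limsup_add_le (isBoundedUnder_of_eventually_ge (a := 0) (Eventually.of_forall
          fun _ => by positivity)) hbdd_a (isCoboundedUnder_le_of_le F fun _ => by positivity)
          hbdd_b
    _ = a • limsup (fun i => ‖z + v i‖) F + b • limsup (fun i => ‖w + v i‖) F := by
        rw [limsup_const_mul_of_nonneg (hbdd z) (hcobdd z) ha,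
          limsup_const_mul_of_nonneg (hbdd w) (hcobdd w) hb, smul_eq_mul, smul_eq_mul]

lemma limsup_norm_add_le_of_mem_closure_convexHull [F.NeBot] [NormedSpace ℝ E]
    (hv : F.IsBoundedUnder (· ≤ ·) (‖v ·‖))
    {G : Set E} {c : ℝ} (hG : ∀ z ∈ G, limsup (fun i => ‖z + v i‖) F ≤ c) {y : E}
    (hy : y ∈ closure (convexHull ℝ G)) :
    limsup (fun i => ‖y + v i‖) F ≤ c := by
  have hclosed : IsClosed {z : E | limsup (fun i => ‖z + v i‖) F ≤ c} :=
    isClosed_le (lipschitzWith_limsup_norm_add hv).continuous continuous_const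
  have hconvex : Convex ℝ {z : E | limsup (fun i => ‖z + v i‖) F ≤ c} := by
    simpa using (convexOn_limsup_norm_add hv).convex_le c
  exact closure_minimal (convexHull_min hG hconvex) hclosed hy

end LimsupNormAdd

theorem rho_le_of_generating_general
    (A : X →L[ℝ] Y) (p : ℝ) (G : Set Y)
    (hG₂ : closure (convexHull ℝ G) = Metric.closedBall (0 : Y) 1)
    (C σ : ℝ) (hC : 0 < C) (hσ : 0 < σ)
    (h : ∀ y ∈ G, ∀ N : Net X, NetInBall N σ → WeaklyNullNet N →
      Filter.limsup (fun i => ‖y + A (N.toFun i)‖) N.F ≤ 1 + C * σ ^ p) :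
    rho A σ ≤ C * σ ^ p := by
  have hbound : 0 ≤ C * σ ^ p := by positivity
  rw [rho]
  split_ifs
  · exact hbound
  refine Real.sSup_le ?_ hbound
  rintro r ⟨N, y, hy, hball, hnull, rfl⟩
  have := N.neBot_F
  have hAN : N.F.IsBoundedUnder (· ≤ ·) fun i => ‖A (N.toFun i)‖ :=
    isBoundedUnder_of ⟨‖A‖ * σ, fun i => A.le_of_opNorm_le_of_le le_rfl (hball i)⟩
  have hy' : y ∈ closure (convexHull ℝ G) := by rwa [hG₂, mem_closedBall_zero_iff]
  have := limsup_norm_add_le_of_mem_closure_convexHull hAN (fun z hz => h z hz N hball hnull) hy'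
  linarith

/-- If `G ⊆ B_Y` has closed convex hull equal to `B_Y` and for every `y ∈ G` and every
weakly null net `(x_λ) ⊆ σ B_X` one has `limsup_λ ‖y + A x_λ‖ ≤ 1 + C σ^p`, then
`ρ(σ, A) ≤ C σ^p`. -/
theorem rho_le_of_generating [CompleteSpace X] [CompleteSpace Y]
    (A : X →L[ℝ] Y) (p : ℝ) (hp : 1 < p) (G : Set Y)
    (hG₁ : G ⊆ Metric.closedBall (0 : Y) 1)
    (hG₂ : closure (convexHull ℝ G) = Metric.closedBall (0 : Y) 1)
    (C σ : ℝ) (hC : 0 < C) (hσ : 0 < σ)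
    (h : ∀ y ∈ G, ∀ N : Net X, NetInBall N σ → WeaklyNullNet N →
      Filter.limsup (fun i => ‖y + A (N.toFun i)‖) N.F ≤ 1 + C * σ ^ p) :
    rho A σ ≤ C * σ ^ p :=
  rho_le_of_generating_general A p G hG₂ C σ hC hσ h
end

section
/- For a bounded operator A : X → Y, the modulus ρ(·, A) is convex on [0, ∞), and consequently lim_{σ→0⁺} ρ(σ, A)/σ = inf_{σ>0} ρ(σ, A)/σ. -/
open Filter
open scoped Classical

variable {X Y : Type*} [NormedAddCommGroup X] [NormedSpace ℝ X]
  [NormedAddCommGroup Y] [NormedSpace ℝ Y]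

/-! Rescaling a weakly null net `x` in the ball of radius `σ = a s + b t` (with `a + b = 1`)
gives nets `c x`, `d x` in the balls of radii `s`, `t` with `a c + b d = 1`, and
`y + A x = a (y + A (c x)) + b (y + A (d x))`; taking limsups yields
`ρ(σ) ≤ a ρ(s) + b ρ(t)`. Since moreover `ρ(0) = 0`, the slope `ρ(σ)/σ` is monotone in `σ > 0`,
and `ρ ≥ 0` bounds it below, so it converges to its infimum as `σ → 0⁺`. -/

namespace Net

instance instNeBotF {X : Type*} (N : Net X) : N.F.NeBot := by
  let _ := N.pre
  have := N.ne
  have := N.dir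
  exact atTop_neBot

def const {X : Type*} (x : X) : Net X :=
  ⟨Unit, inferInstance, ⟨fun _ b => ⟨b, le_rfl, le_rfl⟩⟩, ⟨()⟩, fun _ => x⟩

@[simp]
lemma const_toFun {X : Type*} (x : X) (i : (const x).ι) : (const x).toFun i = x := rfl

instance : SMul ℝ (Net X) :=
  ⟨fun c N => ⟨N.ι, N.pre, N.dir, N.ne, fun i => c • N.toFun i⟩⟩

@[simp]
lemma smul_toFun (c : ℝ) (N : Net X) (i : N.ι) : (c • N).toFun i = c • N.toFun i := rfl

@[simp]
lemma smul_F (c : ℝ) (N : Net X) : (c • N).F = N.F := rfl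

end Net

lemma WeaklyNullNet.const_zero : WeaklyNullNet (Net.const (0 : X)) := fun f => by
  simp

lemma WeaklyNullNet.smul {N : Net X} (hN : WeaklyNullNet N) (c : ℝ) :
    WeaklyNullNet (c • N) := fun f => by
  show Tendsto (fun i => f (c • N.toFun i)) N.F _
  simpa using (hN f).const_mul c

lemma NetInBall.const_zero {X : Type*} [NormedAddCommGroup X] {σ : ℝ} (hσ : 0 ≤ σ) :
    NetInBall (Net.const (0 : X)) σ := fun _ => by
  simpa using hσ

lemma NetInBall.smul {N : Net X} {σ : ℝ} (hN : NetInBall N σ) (c : ℝ) :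
    NetInBall (c • N) (|c| * σ) := fun i => by
  rw [Net.smul_toFun, norm_smul, Real.norm_eq_abs]
  exact mul_le_mul_of_nonneg_left (hN i) (abs_nonneg c)

lemma NetInBall.mono {X : Type*} [NormedAddCommGroup X] {N : Net X} {σ τ : ℝ}
    (hN : NetInBall N σ) (hστ : σ ≤ τ) : NetInBall N τ :=
  fun i => (hN i).trans hστ

section Limsup

variable (A : X →L[ℝ] Y) (y : Y) {N : Net X} {σ : ℝ}

lemma NetInBall.norm_add_apply_le (hN : NetInBall N σ) (i : N.ι) :
    ‖y + A (N.toFun i)‖ ≤ ‖y‖ + ‖A‖ * σ :=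
  (norm_add_le _ _).trans <| add_le_add_right
    ((A.le_opNorm _).trans (mul_le_mul_of_nonneg_left (hN i) (norm_nonneg A))) _

lemma NetInBall.isBoundedUnder_norm_add_apply (hN : NetInBall N σ) :
    IsBoundedUnder (· ≤ ·) N.F (fun i => ‖y + A (N.toFun i)‖) :=
  isBoundedUnder_of ⟨_, hN.norm_add_apply_le A y⟩

lemma isCoboundedUnder_norm_add_apply :
    IsCoboundedUnder (· ≤ ·) N.F (fun i => ‖y + A (N.toFun i)‖) :=
  (isBoundedUnder_of ⟨0, fun _ => norm_nonneg _⟩ :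
    IsBoundedUnder (· ≥ ·) _ _).isCoboundedUnder_le

lemma NetInBall.limsup_norm_add_apply_le (hN : NetInBall N σ) :
    limsup (fun i => ‖y + A (N.toFun i)‖) N.F ≤ ‖y‖ + ‖A‖ * σ :=
  limsup_le_of_le (isCoboundedUnder_norm_add_apply A y) (.of_forall (hN.norm_add_apply_le A y))

end Limsup

lemma limsup_le_convex_comb_limsup {ι : Type*} {l : Filter ι} {f g h : ι → ℝ} {a b : ℝ}
    (ha : 0 ≤ a) (hb : 0 ≤ b) (hab : a + b = 1) (hf : IsCoboundedUnder (· ≤ ·) l f)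
    (hg : IsBoundedUnder (· ≤ ·) l g) (hh : IsBoundedUnder (· ≤ ·) l h)
    (hfgh : ∀ᶠ i in l, f i ≤ a * g i + b * h i) :
    limsup f l ≤ a * limsup g l + b * limsup h l := by
  refine le_of_forall_pos_le_add fun ε hε => limsup_le_of_le hf ?_
  filter_upwards [hfgh, eventually_lt_of_limsup_lt (lt_add_of_pos_right _ hε) hg,
    eventually_lt_of_limsup_lt (lt_add_of_pos_right _ hε) hh] with i hi hgi hhi
  nlinarith [mul_le_mul_of_nonneg_left hgi.le ha, mul_le_mul_of_nonneg_left hhi.le hb]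

lemma le_rho (A : X →L[ℝ] Y) {N : Net X} {y : Y} {σ : ℝ} (hy : ‖y‖ ≤ 1) (hN : NetInBall N σ)
    (hw : WeaklyNullNet N) : limsup (fun i => ‖y + A (N.toFun i)‖) N.F - 1 ≤ rho A σ := by
  have hbound := hN.limsup_norm_add_apply_le A y
  by_cases hA : A = 0
  · simp only [rho, hA, if_true, norm_zero, zero_mul, add_zero] at hbound ⊢
    linarith
  rw [rho, if_neg hA]
  refine le_csSup ⟨‖A‖ * σ, ?_⟩ ⟨N, y, hy, hN, hw, rfl⟩
  rintro _ ⟨N', y', hy', hN', -, rfl⟩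
  linarith [hN'.limsup_norm_add_apply_le A y']

lemma rho_le_of_forall (A : X →L[ℝ] Y) {σ c : ℝ} (hc : 0 ≤ c)
    (h : ∀ (N : Net X) (y : Y), ‖y‖ ≤ 1 → NetInBall N σ → WeaklyNullNet N →
      limsup (fun i => ‖y + A (N.toFun i)‖) N.F - 1 ≤ c) :
    rho A σ ≤ c := by
  rw [rho]
  split_ifs
  · exact hc
  · exact Real.sSup_le (by rintro _ ⟨N, y, hy, hN, hw, rfl⟩; exact h N y hy hN hw) hc

lemma rho_nonneg (A : X →L[ℝ] Y) {σ : ℝ} (hσ : 0 ≤ σ) : 0 ≤ rho A σ := by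
  by_cases hA : A = 0
  · simp [rho, hA]
  obtain ⟨x, hx⟩ : ∃ x, A x ≠ 0 := by
    by_contra! h
    exact hA (ContinuousLinearMap.ext h)
  have : Nontrivial Y := ⟨⟨_, _, hx⟩⟩
  obtain ⟨y, hy⟩ := exists_norm_eq Y zero_le_one
  have := le_rho A hy.le (NetInBall.const_zero (X := X) hσ) WeaklyNullNet.const_zero
  simpa [hy] using this

lemma rho_zero (A : X →L[ℝ] Y) : rho A 0 = 0 :=
  le_antisymm (rho_le_of_forall A le_rfl fun N y hy hN _ => by
    linarith [hN.limsup_norm_add_apply_le A y]) (rho_nonneg A le_rfl)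

lemma exists_scale_factors {a b s t : ℝ} (hab : a + b = 1) (hs : 0 ≤ s) (ht : 0 ≤ t)
    (hσ : 0 ≤ a * s + b * t) :
    ∃ c d : ℝ, 0 ≤ c ∧ 0 ≤ d ∧ a * c + b * d = 1 ∧
      c * (a * s + b * t) ≤ s ∧ d * (a * s + b * t) ≤ t := by
  rcases hσ.eq_or_lt with hσ | hσ
  · refine ⟨1, 1, zero_le_one, zero_le_one, by linarith, ?_, ?_⟩ <;> simpa [← hσ]
  refine ⟨s / (a * s + b * t), t / (a * s + b * t), by positivity, by positivity, ?_,
    (div_mul_cancel₀ _ hσ.ne').le, (div_mul_cancel₀ _ hσ.ne').le⟩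
  field_simp

theorem rho_convexOn (A : X →L[ℝ] Y) : ConvexOn ℝ (Set.Ici 0) (rho A) := by
  refine ⟨convex_Ici 0, fun s (hs : 0 ≤ s) t (ht : 0 ≤ t) a b ha hb hab => ?_⟩
  simp only [smul_eq_mul]
  obtain ⟨c, d, hc, hd, hcd, hcs, hdt⟩ := exists_scale_factors hab hs ht (by positivity)
  have hρs := rho_nonneg A hs
  have hρt := rho_nonneg A ht
  refine rho_le_of_forall A (by positivity) fun N y hy hN hw => ?_
  have hNc : NetInBall (c • N) s := (hN.smul c).mono (by rwa [abs_of_nonneg hc])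
  have hNd : NetInBall (d • N) t := (hN.smul d).mono (by rwa [abs_of_nonneg hd])
  have hsplit : ∀ i, ‖y + A (N.toFun i)‖ ≤
      a * ‖y + A (c • N.toFun i)‖ + b * ‖y + A (d • N.toFun i)‖ := fun i => by
    have : y + A (N.toFun i) =
        a • (y + A (c • N.toFun i)) + b • (y + A (d • N.toFun i)) := by
      rw [map_smul, map_smul, smul_add, smul_add, smul_smul, smul_smul, add_add_add_comm,
        ← add_smul, ← add_smul, hab, hcd, one_smul, one_smul]
    rw [this]
    refine (norm_add_le _ _).trans_eq ?_
    rw [norm_smul, norm_smul, Real.norm_of_nonneg ha, Real.norm_of_nonneg hb]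
  have hs' := le_rho A hy hNc (hw.smul c)
  have ht' := le_rho A hy hNd (hw.smul d)
  have hgc := hNc.isBoundedUnder_norm_add_apply A y
  have hgd := hNd.isBoundedUnder_norm_add_apply A y
  simp only [Net.smul_toFun, Net.smul_F] at hs' ht' hgc hgd
  have hlimsup := limsup_le_convex_comb_limsup ha hb hab
    (isCoboundedUnder_norm_add_apply A y) hgc hgd (.of_forall hsplit)
  linarith [mul_le_mul_of_nonneg_left hs' ha, mul_le_mul_of_nonneg_left ht' hb]

lemma ConvexOn.tendsto_div_nhdsGT_zero {f : ℝ → ℝ} (hf : ConvexOn ℝ (Set.Ici 0) f)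
    (h0 : f 0 = 0) (hbdd : BddBelow ((fun σ => f σ / σ) '' Set.Ioi 0)) :
    Tendsto (fun σ => f σ / σ) (nhdsWithin 0 (Set.Ioi 0))
      (nhds (sInf ((fun σ => f σ / σ) '' Set.Ioi 0))) := by
  refine MonotoneOn.tendsto_nhdsGT (fun x (hx : 0 < x) y (hy : 0 < y) hxy => ?_) hbdd
  simpa [h0] using hf.secant_mono Set.self_mem_Ici hx.le hy.le hx.ne' hy.ne' hxy

theorem rho_convexOn_and_tendsto_general
    (A : X →L[ℝ] Y) :
    ConvexOn ℝ (Set.Ici (0 : ℝ)) (rho A) ∧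
      Tendsto (fun σ => rho A σ / σ) (nhdsWithin 0 (Set.Ioi (0 : ℝ)))
        (nhds (sInf {r : ℝ | ∃ σ : ℝ, 0 < σ ∧ r = rho A σ / σ})) := by
  have hconv := rho_convexOn A
  have hbdd : BddBelow ((fun σ => rho A σ / σ) '' Set.Ioi 0) :=
    ⟨0, by rintro _ ⟨σ, hσ, rfl⟩; exact div_nonneg (rho_nonneg A hσ.le) hσ.le⟩
  have hset : {r : ℝ | ∃ σ : ℝ, 0 < σ ∧ r = rho A σ / σ} =
      (fun σ => rho A σ / σ) '' Set.Ioi 0 := by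
    ext r
    simp [eq_comm]
  rw [hset]
  exact ⟨hconv, hconv.tendsto_div_nhdsGT_zero (rho_zero A) hbdd⟩

/-- The modulus `ρ(·, A)` is convex on `[0, ∞)`, and consequently
`lim_{σ → 0⁺} ρ(σ, A)/σ = inf_{σ > 0} ρ(σ, A)/σ`. -/
theorem rho_convexOn_and_tendsto [CompleteSpace X] [CompleteSpace Y]
    (A : X →L[ℝ] Y) :
    ConvexOn ℝ (Set.Ici (0 : ℝ)) (rho A) ∧
      Tendsto (fun σ => rho A σ / σ) (nhdsWithin 0 (Set.Ioi (0 : ℝ)))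
        (nhds (sInf {r : ℝ | ∃ σ : ℝ, 0 < σ ∧ r = rho A σ / σ})) :=
  rho_convexOn_and_tendsto_general A
end

section
/- An operator A : X → Y satisfies ρ(σ, A) = 0 for every σ > 0 if and only if A is compact. -/
/-!
A compact operator sends bounded weakly null nets to norm null nets: every cluster point of
`A x_λ` lies in the compact set `closure (A (σ B_X))` and is killed by every functional. Hence
`limsup ‖y + A x_λ‖ = ‖y‖ ≤ 1`, with equality for a unit vector `y` and the zero net.

Conversely, if `A` is not compact then, `Y` being complete, `A (B_X)` is not totally bounded and
contains an `ε`-separated sequence `A u_n`. Along `U ×ˢ U` for a free ultrafilter `U` on `ℕ`, the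
differences `(σ / 2) (u_m - u_n)` are weakly null, because each bounded sequence `f (u_n)`
converges along `U`, while `‖A ((σ / 2) (u_m - u_n))‖ ≥ σ ε / 2` whenever `m ≠ n`. Every filter
is the limit filter of a net, so this gives `ρ(4 / ε, A) ≥ 1`.
-/

open Filter
open scoped Classical

variable {X Y : Type*} [NormedAddCommGroup X] [NormedSpace ℝ X]
  [NormedAddCommGroup Y] [NormedSpace ℝ Y]

open Topology

namespace Net

def OfFilterIndex {α : Type} (l : Filter α) : Type := {p : α × Set α // p.1 ∈ p.2 ∧ p.2 ∈ l}

section OfFilter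

variable {α : Type} {E : Type*} (l : Filter α) [l.NeBot]

instance : Preorder (OfFilterIndex l) :=
  Preorder.lift fun p => OrderDual.toDual p.1.2

instance : IsDirectedOrder (OfFilterIndex l) where
  directed p q :=
    have hpq : p.1.2 ∩ q.1.2 ∈ l := inter_mem p.2.2 q.2.2
    have ⟨a, ha⟩ := l.nonempty_of_mem hpq
    ⟨⟨(a, p.1.2 ∩ q.1.2), ha, hpq⟩, Set.inter_subset_left, Set.inter_subset_right⟩

instance : Nonempty (OfFilterIndex l) :=
  have ⟨a, _⟩ := l.nonempty_of_mem univ_mem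
  ⟨⟨(a, Set.univ), trivial, univ_mem⟩⟩

def ofFilter (g : α → E) : Net E where
  ι := OfFilterIndex l
  pre := inferInstance
  dir := inferInstance
  ne := inferInstance
  toFun p := g p.1.1

theorem map_F_ofFilter (g : α → E) :
    map (fun p : OfFilterIndex l => p.1.1) (ofFilter l g).F = l := by
  show map _ (atTop : Filter (OfFilterIndex l)) = l
  refine le_antisymm (fun s hs => ?_) (fun t ht => ?_)
  · obtain ⟨a, ha⟩ := l.nonempty_of_mem hs
    exact mem_atTop_sets.mpr ⟨⟨(a, s), ha, hs⟩, fun q hq => hq q.2.1⟩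
  · obtain ⟨p, hp⟩ := mem_atTop_sets.mp (mem_map.mp ht)
    exact mem_of_superset p.2.2 fun b hb =>
      hp ⟨(b, p.1.2), hb, p.2.2⟩ (le_refl (OrderDual.toDual p.1.2))

variable {l}

theorem tendsto_ofFilter_iff {g : α → E} {Z : Type*} {φ : E → Z} {l' : Filter Z} :
    Tendsto (fun i => φ ((ofFilter l g).toFun i)) (ofFilter l g).F l' ↔ Tendsto (φ ∘ g) l l' := by
  conv_rhs => rw [← map_F_ofFilter l g]
  exact tendsto_map'_iff.symm

theorem limsup_ofFilter {g : α → E} (φ : E → ℝ) :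
    limsup (fun i => φ ((ofFilter l g).toFun i)) (ofFilter l g).F = limsup (φ ∘ g) l := by
  conv_rhs => rw [← map_F_ofFilter l g]
  rfl

end OfFilter

instance {E : Type*} (N : Net E) : N.F.NeBot :=
  letI := N.pre
  atTop_neBot_iff.mpr ⟨N.ne, N.dir⟩

end Net

theorem Filter.frequently_prod_ne_of_le_cofinite {α : Type*} {l : Filter α} [l.NeBot]
    (hl : l ≤ cofinite) : ∃ᶠ p in l ×ˢ l, p.1 ≠ p.2 := by
  intro h
  obtain ⟨t, ht, hdiag⟩ :=
    eventually_prod_self_iff (r := (· = ·)).mp (h.mono fun _ hp => not_not.mp hp)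
  have hinf : t.Infinite := fun hfin =>
    (l.nonempty_of_mem (inter_mem ht (hl hfin.compl_mem_cofinite))).elim fun _ hx => hx.2 hx.1
  obtain ⟨a, ha, b, hb, hab⟩ := hinf.nontrivial
  exact hab (hdiag a ha b hb)

theorem Ultrafilter.tendsto_sub_prod_of_abs_le {α : Type*} (U : Ultrafilter α) {φ : α → ℝ}
    {C : ℝ} (hφ : ∀ a, |φ a| ≤ C) :
    Tendsto (fun p : α × α => φ p.1 - φ p.2) (↑U ×ˢ ↑U) (𝓝 0) := by
  obtain ⟨c, -, hc⟩ := isCompact_Icc.ultrafilter_le_nhds' (U.map φ)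
    (Ultrafilter.mem_map.mpr (univ_mem' fun a => abs_le.mp (hφ a)))
  have hφc : Tendsto φ U (𝓝 c) := hc
  simpa using (hφc.comp tendsto_fst).sub (hφc.comp tendsto_snd)

theorem Metric.exists_pairwise_le_dist_of_not_totallyBounded {α : Type*} [PseudoMetricSpace α]
    {s : Set α} (hs : ¬TotallyBounded s) :
    ∃ ε > 0, ∃ u : ℕ → α, (∀ n, u n ∈ s) ∧ Pairwise fun m n => ε ≤ dist (u m) (u n) := by
  obtain ⟨ε, hε, hcover⟩ : ∃ ε > 0, ∀ t : Set α, t.Finite → ∃ c ∈ s, ∀ y ∈ t, ε ≤ dist c y := by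
    simpa [Metric.totallyBounded_iff, Set.not_subset] using hs
  obtain ⟨u, hu⟩ := Set.seq_of_forall_finite_exists hcover
  have hlt : ∀ m n, m < n → ε ≤ dist (u m) (u n) := fun m n hmn =>
    dist_comm (u n) (u m) ▸ (hu n).2 _ (Set.mem_image_of_mem u hmn)
  refine ⟨ε, hε, u, fun n => (hu n).1, fun m n hmn => ?_⟩
  rcases hmn.lt_or_gt with h | h
  · exact hlt m n h
  · exact dist_comm (u n) (u m) ▸ hlt n m h

section CompactOperator

variable {𝕜 E F : Type*} [RCLike 𝕜] [NormedAddCommGroup E] [NormedSpace 𝕜 E]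
  [NormedAddCommGroup F] [NormedSpace 𝕜 F] {A : E →L[𝕜] F}

theorem IsCompactOperator.tendsto_zero_of_forall_dual {ι : Type*} {l : Filter ι} {x : ι → E}
    {σ : ℝ} (hA : IsCompactOperator A) (hx : ∀ᶠ i in l, ‖x i‖ ≤ σ)
    (hw : ∀ f : StrongDual 𝕜 E, Tendsto (fun i => f (x i)) l (𝓝 0)) :
    Tendsto (fun i => A (x i)) l (𝓝 0) := by
  refine (hA.isCompact_closure_image_closedBall σ).tendsto_nhds_of_unique_mapClusterPt ?_
    fun z _ hz => SeparatingDual.eq_zero_of_forall_dual_eq_zero (R := 𝕜) fun f => ?_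
  · filter_upwards [hx] with i hi
    exact subset_closure (Set.mem_image_of_mem A (mem_closedBall_zero_iff.mpr hi))
  · exact eq_of_nhds_neBot
      ((hz.continuousAt_comp f.continuous.continuousAt).clusterPt.mono (hw (f.comp A)))

theorem exists_pairwise_le_norm_sub_of_not_isCompactOperator [CompleteSpace F]
    (hA : ¬IsCompactOperator A) :
    ∃ ε > 0, ∃ u : ℕ → E, (∀ n, ‖u n‖ ≤ 1) ∧ Pairwise fun m n => ε ≤ ‖A (u m) - A (u n)‖ := by
  have hnot : ¬TotallyBounded (A '' Metric.closedBall 0 1) := fun htb =>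
    hA <| (isCompactOperator_iff_isCompact_closure_image_closedBall (A : E →ₗ[𝕜] F)
      one_pos).mpr ((totallyBounded_closure.mpr htb).isCompact_of_isClosed isClosed_closure)
  obtain ⟨ε, hε, v, hv, hsep⟩ := Metric.exists_pairwise_le_dist_of_not_totallyBounded hnot
  choose u hu hAu using hv
  refine ⟨ε, hε, u, fun n => mem_closedBall_zero_iff.mp (hu n), fun m n hmn => ?_⟩
  simpa [hAu, dist_eq_norm] using hsep hmn

end CompactOperator

def rhoSet (A : X →L[ℝ] Y) (σ : ℝ) : Set ℝ :=
  {r | ∃ (N : Net X) (y : Y), ‖y‖ ≤ 1 ∧ NetInBall N σ ∧ WeaklyNullNet N ∧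
    r = limsup (fun i => ‖y + A (N.toFun i)‖) N.F - 1}

section Rho

variable (A : X →L[ℝ] Y) {σ : ℝ}

theorem rho_of_ne_zero (hA : A ≠ 0) : rho A σ = sSup (rhoSet A σ) := if_neg hA

theorem norm_add_apply_le {y : Y} {x : X} (hy : ‖y‖ ≤ 1) (hx : ‖x‖ ≤ σ) :
    ‖y + A x‖ ≤ 1 + ‖A‖ * σ :=
  (norm_add_le _ _).trans <|
    add_le_add hy ((A.le_opNorm x).trans (mul_le_mul_of_nonneg_left hx (norm_nonneg A)))

theorem bddAbove_rhoSet : BddAbove (rhoSet A σ) := by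
  refine ⟨‖A‖ * σ, ?_⟩
  rintro r ⟨N, y, hy, hN, -, rfl⟩
  have : limsup (fun i => ‖y + A (N.toFun i)‖) N.F ≤ 1 + ‖A‖ * σ :=
    limsup_le_of_le (isCoboundedUnder_le_of_le N.F fun _ => norm_nonneg _)
      (Eventually.of_forall fun i => norm_add_apply_le A hy (hN i))
  linarith

theorem le_rho_of_mem_rhoSet (hA : A ≠ 0) {r : ℝ} (hr : r ∈ rhoSet A σ) : r ≤ rho A σ := by
  rw [rho_of_ne_zero A hA]
  exact le_csSup (bddAbove_rhoSet A) hr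

theorem limsup_sub_one_mem_rhoSet {α : Type} {l : Filter α} [l.NeBot] {x : α → X}
    (hx : ∀ a, ‖x a‖ ≤ σ) (hw : ∀ f : StrongDual ℝ X, Tendsto (fun a => f (x a)) l (𝓝 0))
    {y : Y} (hy : ‖y‖ ≤ 1) : limsup (fun a => ‖y + A (x a)‖) l - 1 ∈ rhoSet A σ :=
  ⟨Net.ofFilter l x, y, hy, fun _ => hx _, fun f => Net.tendsto_ofFilter_iff.mpr (hw f),
    by rw [Net.limsup_ofFilter (fun v => ‖y + A v‖)]; rfl⟩

theorem zero_mem_rhoSet [Nontrivial Y] (hσ : 0 ≤ σ) : 0 ∈ rhoSet A σ := by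
  obtain ⟨y, hy⟩ := exists_norm_eq Y zero_le_one
  have := limsup_sub_one_mem_rhoSet A (l := (⊤ : Filter Unit)) (x := fun _ => 0)
    (fun _ => by simpa using hσ) (fun f => by simp) hy.le
  simpa [hy] using this

theorem nonpos_of_mem_rhoSet (hA : IsCompactOperator A) {r : ℝ} (hr : r ∈ rhoSet A σ) :
    r ≤ 0 := by
  obtain ⟨N, y, hy, hN, hw, rfl⟩ := hr
  have hAx := hA.tendsto_zero_of_forall_dual (Eventually.of_forall hN) hw
  have : Tendsto (fun i => ‖y + A (N.toFun i)‖) N.F (𝓝 ‖y‖) := by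
    simpa using (tendsto_const_nhds (x := y)).add hAx |>.norm
  rw [this.limsup_eq]
  linarith

theorem rho_eq_zero_of_isCompactOperator (hA : IsCompactOperator A) (hσ : 0 ≤ σ) :
    rho A σ = 0 := by
  by_cases hA0 : A = 0
  · simp [rho, hA0]
  obtain ⟨x, hx⟩ := DFunLike.ne_iff.mp hA0
  have : Nontrivial Y := ⟨⟨_, _, hx⟩⟩
  rw [rho_of_ne_zero A hA0]
  exact le_antisymm (csSup_le ⟨0, zero_mem_rhoSet A hσ⟩ fun _ => nonpos_of_mem_rhoSet A hA)
    (le_csSup (bddAbove_rhoSet A) (zero_mem_rhoSet A hσ))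

theorem exists_mem_rhoSet_ge_of_pairwise {ε : ℝ} {u : ℕ → X} (hu : ∀ n, ‖u n‖ ≤ 1)
    (hsep : Pairwise fun m n => ε ≤ ‖A (u m) - A (u n)‖) (hσ : 0 ≤ σ) :
    ∃ r ∈ rhoSet A σ, σ * ε / 2 - 1 ≤ r := by
  let U := Ultrafilter.of (cofinite : Filter ℕ)
  let x : ℕ × ℕ → X := fun p => (σ / 2) • (u p.1 - u p.2)
  have hx : ∀ p, ‖x p‖ ≤ σ := fun p =>
    calc ‖x p‖ = σ / 2 * ‖u p.1 - u p.2‖ := by simp [x, norm_smul, abs_of_nonneg hσ]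
      _ ≤ σ / 2 * 2 := by
        gcongr
        exact (norm_sub_le _ _).trans (by linarith [hu p.1, hu p.2])
      _ = σ := by ring
  have hw : ∀ f : StrongDual ℝ X, Tendsto (fun p => f (x p)) (↑U ×ˢ ↑U) (𝓝 0) := fun f => by
    have hf : ∀ n, |f (u n)| ≤ ‖f‖ := fun n =>
      (f.le_opNorm (u n)).trans (mul_le_of_le_one_right (norm_nonneg f) (hu n))
    simpa [x, mul_sub] using (U.tendsto_sub_prod_of_abs_le hf).const_mul (σ / 2)
  have hlow : ∃ᶠ p in ↑U ×ˢ ↑U, σ * ε / 2 ≤ ‖0 + A (x p)‖ :=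
    (frequently_prod_ne_of_le_cofinite (Ultrafilter.of_le _)).mono fun p hp => by
      have hσ2 : 0 ≤ σ / 2 := by positivity
      have := mul_le_mul_of_nonneg_left (hsep hp) hσ2
      simp only [x, zero_add, map_smul, map_sub, norm_smul, Real.norm_eq_abs, abs_of_nonneg hσ2]
      linarith
  have hbdd : IsBoundedUnder (· ≤ ·) (↑U ×ˢ ↑U) fun p => ‖0 + A (x p)‖ :=
    isBoundedUnder_of ⟨_, fun p => norm_add_apply_le A (by simp) (hx p)⟩
  exact ⟨_, limsup_sub_one_mem_rhoSet A hx hw (by simp : ‖(0 : Y)‖ ≤ 1),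
    by linarith [le_limsup_of_frequently_le hlow hbdd]⟩

end Rho

theorem rho_eq_zero_iff_isCompactOperator_general [CompleteSpace Y]
    (A : X →L[ℝ] Y) :
    (∀ σ : ℝ, 0 < σ → rho A σ = 0) ↔ IsCompactOperator A := by
  refine ⟨fun h => ?_, fun hA σ hσ => rho_eq_zero_of_isCompactOperator A hA hσ.le⟩
  by_contra hA
  have hA0 : A ≠ 0 := fun h0 => hA (h0 ▸ isCompactOperator_zero)
  obtain ⟨ε, hε, u, hu, hsep⟩ := exists_pairwise_le_norm_sub_of_not_isCompactOperator hA
  obtain ⟨r, hr, hr_ge⟩ := exists_mem_rhoSet_ge_of_pairwise A hu hsep (σ := 4 / ε) (by positivity)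
  have hr_le : r ≤ 0 := h (4 / ε) (by positivity) ▸ le_rho_of_mem_rhoSet A hA0 hr
  have : 4 / ε * ε / 2 - 1 = 1 := by field_simp; norm_num
  linarith

/-- An operator `A : X → Y` satisfies `ρ(σ, A) = 0` for every `σ > 0` if and only if
`A` is a compact operator. -/
theorem rho_eq_zero_iff_isCompactOperator [CompleteSpace X] [CompleteSpace Y]
    (A : X →L[ℝ] Y) :
    (∀ σ : ℝ, 0 < σ → rho A σ = 0) ↔ IsCompactOperator A :=
  rho_eq_zero_iff_isCompactOperator_general A
end

section
/- Let A_i : X_i → Y_i (i ∈ I) be operators with sup_i ‖A_i‖ < ∞, and let A be the induced operator on the c₀(I)-direct sums, A : (⊕ X_i)_{c₀} → (⊕ Y_i)_{c₀}, A|_{X_i} = A_i. Then t_∞(A) ≤ sup_{i∈I} max{t_∞(A_i), ‖A_i‖}. -/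
open Filter
open scoped Classical ENNReal NNReal

variable {X Y : Type*} [NormedAddCommGroup X] [NormedSpace ℝ X]
  [NormedAddCommGroup Y] [NormedSpace ℝ Y]

/-- `tInf A` (the quantity `t_∞(A)`) is the infimum (in `ℝ≥0∞`, so `∞` if no such
constant exists) of the constants `C > 0` such that for every `y ∈ Y`, every `σ > 0`,
and every weakly null net `(x_λ) ⊆ σ B_X`,
`limsup_λ ‖y + A x_λ‖ ≤ max (‖y‖) (C σ)`. -/
noncomputable def tInf (A : X →L[ℝ] Y) : ℝ≥0∞ :=
  sInf (ENNReal.ofReal '' {C : ℝ | 0 < C ∧ ∀ (y : Y) (σ : ℝ), 0 < σ →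
    ∀ N : Net X, NetInBall N σ → WeaklyNullNet N →
      Filter.limsup (fun i => ‖y + A (N.toFun i)‖) N.F ≤ max ‖y‖ (C * σ)})

instance : Fact ((1 : ℝ≥0∞) ≤ ⊤) := ⟨le_top⟩

/-- The `c₀(I)`-direct sum of a family of normed spaces, realized as the subspace of
the `ℓ_∞`-direct sum consisting of those `x` with `{i : ε ≤ ‖x i‖}` finite for every
`ε > 0`. -/
noncomputable def c0Sum {I : Type} (E : I → Type) [∀ i, NormedAddCommGroup (E i)]
    [∀ i, NormedSpace ℝ (E i)] : Submodule ℝ (lp E ⊤) where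
  carrier := {x | ∀ ε : ℝ, 0 < ε → {i : I | ε ≤ ‖(x : ∀ i, E i) i‖}.Finite}
  zero_mem' := by
    intro ε hε
    refine Set.Finite.subset (Set.finite_empty) ?_
    intro i hi
    simp only [Set.mem_setOf_eq, lp.coeFn_zero, Pi.zero_apply, norm_zero] at hi
    exact absurd hi (by linarith)
  add_mem' := by
    intro a b ha hb ε hε
    refine Set.Finite.subset (Set.Finite.union (ha (ε / 2) (by linarith))
      (hb (ε / 2) (by linarith))) ?_
    intro i hi
    simp only [Set.mem_setOf_eq, lp.coeFn_add, Pi.add_apply] at hi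
    simp only [Set.mem_union, Set.mem_setOf_eq]
    by_contra hc
    push_neg at hc
    have hn := norm_add_le ((a : ∀ i, E i) i) ((b : ∀ i, E i) i)
    linarith [hc.1, hc.2]
  smul_mem' := by
    intro c x hx ε hε
    refine Set.Finite.subset (hx (ε / (‖c‖ + 1)) (by positivity)) ?_
    intro i hi
    simp only [Set.mem_setOf_eq, lp.coeFn_smul, Pi.smul_apply, norm_smul] at hi
    simp only [Set.mem_setOf_eq]
    rw [div_le_iff₀ (by positivity : (0:ℝ) < ‖c‖ + 1)]
    nlinarith [norm_nonneg ((x : ∀ i, E i) i), norm_nonneg c]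

/-!
Fix `C` exceeding every `t_∞(A_i)` and every `‖A_i‖`. Given `y` in the `c₀`-sum, `c > max ‖y‖ (Cσ)`
and a weakly null net `(x_λ) ⊆ σ B`, only finitely many coordinates of `y` have norm at least
`c - Cσ`. On each of these the coordinate net is weakly null, so eventually
`‖y_i + A_i x_{λ,i}‖ < c` by the choice of `C`; on all other coordinates
`‖y_i + A_i x_{λ,i}‖ ≤ ‖y_i‖ + Cσ < c` outright. Hence eventually `‖y + A x_λ‖ ≤ c`.
-/

section Net

variable {α β : Type*}

def Net.map (N : Net α) (f : α → β) : Net β := ⟨N.ι, N.pre, N.dir, N.ne, f ∘ N.toFun⟩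

instance Net.neBot_F_s15 (N : Net α) : N.F.NeBot := by
  let _ := N.pre
  exact atTop_neBot_iff.mpr ⟨N.ne, N.dir⟩

end Net

theorem WeaklyNullNet.map {N : Net X} (hN : WeaklyNullNet N) (f : X →L[ℝ] Y) :
    WeaklyNullNet (N.map f) :=
  fun g => hN (g.comp f)

theorem NetInBall.map {α β : Type*} [NormedAddCommGroup α] [NormedAddCommGroup β] {N : Net α}
    {σ : ℝ} (hN : NetInBall N σ) {f : α → β}
    (hf : ∀ x, ‖f x‖ ≤ ‖x‖) : NetInBall (N.map f) σ :=
  fun i => (hf _).trans (hN i)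

/-- The constants admissible in the definition of `tInf`, without the requirement `0 < C`. -/
def TInfBound (A : X →L[ℝ] Y) (C : ℝ) : Prop :=
  ∀ (y : Y) (σ : ℝ), 0 < σ → ∀ N : Net X, NetInBall N σ → WeaklyNullNet N →
    limsup (fun i => ‖y + A (N.toFun i)‖) N.F ≤ max ‖y‖ (C * σ)

section TInfBound

variable {A : X →L[ℝ] Y} {C D : ℝ}

theorem TInfBound.mono (h : TInfBound A C) (hCD : C ≤ D) : TInfBound A D :=
  fun y σ hσ N hN hw =>
    (h y σ hσ N hN hw).trans (max_le_max le_rfl (mul_le_mul_of_nonneg_right hCD hσ.le))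

theorem TInfBound.of_tInf_lt (h : tInf A < ENNReal.ofReal C) : TInfBound A C := by
  obtain ⟨_, ⟨D, ⟨-, hD⟩, rfl⟩, hDC⟩ := sInf_lt_iff.mp h
  exact TInfBound.mono hD (ENNReal.ofReal_lt_ofReal_iff'.mp hDC).1.le

theorem tInf_le_ofReal (hC : 0 < C) (h : TInfBound A C) : tInf A ≤ ENNReal.ofReal C :=
  sInf_le ⟨C, ⟨hC, h⟩, rfl⟩

theorem tInf_le_of_forall_lt {R : ℝ≥0∞}
    (h : ∀ C : ℝ, R < ENNReal.ofReal C → TInfBound A C) : tInf A ≤ R := by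
  refine le_of_forall_gt_imp_ge_of_dense fun b hb => ?_
  rcases eq_or_ne b ⊤ with rfl | hb_top
  · exact le_top
  have hb_pos : 0 < b.toReal := ENNReal.toReal_pos (pos_of_gt hb).ne' hb_top
  rw [← ENNReal.ofReal_toReal hb_top] at hb ⊢
  exact tInf_le_ofReal hb_pos (h _ hb)

theorem TInfBound.eventually_norm_add_lt (hA : TInfBound A C) (y : Y) {σ : ℝ} (hσ : 0 < σ)
    {N : Net X} (hN : NetInBall N σ) (hw : WeaklyNullNet N) {c : ℝ}
    (hc : max ‖y‖ (C * σ) < c) : ∀ᶠ i in N.F, ‖y + A (N.toFun i)‖ < c := by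
  refine eventually_lt_of_limsup_lt ((hA y σ hσ N hN hw).trans_lt hc) ?_
  exact isBoundedUnder_of ⟨‖y‖ + ‖A‖ * σ, fun i =>
    norm_add_le_of_le le_rfl (A.le_opNorm_of_le (hN i))⟩

end TInfBound

namespace c0Sum

variable {I : Type} {E F : I → Type} [∀ i, NormedAddCommGroup (E i)] [∀ i, NormedSpace ℝ (E i)]
  [∀ i, NormedAddCommGroup (F i)] [∀ i, NormedSpace ℝ (F i)]

variable (E) in
noncomputable def proj (i : I) : c0Sum E →L[ℝ] E i :=
  (lp.evalCLM ℝ E ⊤ i).comp (c0Sum E).subtypeL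

theorem norm_proj_apply_le (i : I) (x : c0Sum E) : ‖proj E i x‖ ≤ ‖x‖ :=
  lp.norm_apply_le_norm ENNReal.top_ne_zero (x : lp E ⊤) i

theorem finite_setOf_le_norm_apply (y : c0Sum F) {ε : ℝ} (hε : 0 < ε) :
    {i | ε ≤ ‖(y : lp F ⊤) i‖}.Finite :=
  y.2 ε hε

theorem norm_le_of_forall_le {x : c0Sum F} {c : ℝ} (hc : 0 ≤ c)
    (h : ∀ i, ‖(x : lp F ⊤) i‖ ≤ c) : ‖x‖ ≤ c :=
  lp.norm_le_of_forall_le hc h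

theorem tInfBound_of_forall {T : ∀ i, E i →L[ℝ] F i} {C : ℝ}
    (hT : ∀ i, TInfBound (T i) C) (hTC : ∀ i, ‖T i‖ ≤ C) (A : c0Sum E →L[ℝ] c0Sum F)
    (hA : ∀ (x : c0Sum E) (i : I),
      ((A x : lp F ⊤) : ∀ i, F i) i = T i (((x : lp E ⊤) : ∀ i, E i) i)) :
    TInfBound A C := by
  intro y σ hσ N hN hw
  refine le_of_forall_gt_imp_ge_of_dense fun c hc => ?_
  have hCσ : C * σ < c := (le_max_right _ _).trans_lt hc
  set S := {i | c - C * σ ≤ ‖(y : lp F ⊤) i‖}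
  have h_large : ∀ᶠ l in N.F, ∀ i ∈ S,
      ‖(y : lp F ⊤) i + T i (proj E i (N.toFun l))‖ < c :=
    (eventually_all_finite (finite_setOf_le_norm_apply y (sub_pos.2 hCσ))).2 fun i _ =>
      (hT i).eventually_norm_add_lt _ hσ (hN.map (norm_proj_apply_le i)) (hw.map (proj E i))
        ((max_le_max (lp.norm_apply_le_norm ENNReal.top_ne_zero _ i) le_rfl).trans_lt hc)
  refine limsup_le_of_le (isCoboundedUnder_le_of_le N.F fun l => norm_nonneg _) ?_
  filter_upwards [h_large] with l hl
  refine norm_le_of_forall_le ((norm_nonneg y).trans ((le_max_left _ _).trans hc.le)) fun i => ?_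
  rw [Submodule.coe_add, lp.coeFn_add, Pi.add_apply, hA]
  by_cases hi : c - C * σ ≤ ‖(y : lp F ⊤) i‖
  · exact (hl i hi).le
  · calc ‖(y : lp F ⊤) i + T i (proj E i (N.toFun l))‖
        ≤ ‖(y : lp F ⊤) i‖ + C * σ :=
          norm_add_le_of_le le_rfl
            ((T i).le_of_opNorm_le_of_le (hTC i) ((norm_proj_apply_le i _).trans (hN l)))
      _ ≤ c := by linarith [not_le.mp hi]

end c0Sum

theorem tInf_c0_sum_general {I : Type} (E : I → Type) (F : I → Type)
    [∀ i, NormedAddCommGroup (E i)] [∀ i, NormedSpace ℝ (E i)]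
    [∀ i, NormedAddCommGroup (F i)] [∀ i, NormedSpace ℝ (F i)]
    (T : ∀ i, E i →L[ℝ] F i)
    (A : c0Sum E →L[ℝ] c0Sum F)
    (hA : ∀ (x : c0Sum E) (i : I),
      ((A x : lp F ⊤) : ∀ i, F i) i = T i (((x : lp E ⊤) : ∀ i, E i) i)) :
    tInf A ≤ ⨆ i : I, max (tInf (T i)) (ENNReal.ofReal ‖T i‖) := by
  refine tInf_le_of_forall_lt fun C hC => ?_
  have hlt : ∀ i, max (tInf (T i)) (ENNReal.ofReal ‖T i‖) < ENNReal.ofReal C := fun i =>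
    (le_iSup (fun i => max (tInf (T i)) (ENNReal.ofReal ‖T i‖)) i).trans_lt hC
  refine c0Sum.tInfBound_of_forall (fun i => .of_tInf_lt (max_lt_iff.mp (hlt i)).1)
    (fun i => ?_) A hA
  exact (ENNReal.ofReal_lt_ofReal_iff'.mp (max_lt_iff.mp (hlt i)).2).1.le

/-- For a uniformly bounded family of operators `A_i : X_i → Y_i`, the induced
diagonal operator `A` between the `c₀(I)`-direct sums satisfies
`t_∞(A) ≤ sup_i max (t_∞(A_i), ‖A_i‖)`. -/
theorem tInf_c0_sum {I : Type} [Nonempty I] (E : I → Type) (F : I → Type)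
    [∀ i, NormedAddCommGroup (E i)] [∀ i, NormedSpace ℝ (E i)]
    [∀ i, NormedAddCommGroup (F i)] [∀ i, NormedSpace ℝ (F i)]
    (T : ∀ i, E i →L[ℝ] F i) (hbd : BddAbove (Set.range fun i => ‖T i‖))
    (A : c0Sum E →L[ℝ] c0Sum F)
    (hA : ∀ (x : c0Sum E) (i : I),
      ((A x : lp F ⊤) : ∀ i, F i) i = T i (((x : lp E ⊤) : ∀ i, E i) i)) :
    tInf A ≤ ⨆ i : I, max (tInf (T i)) (ENNReal.ofReal ‖T i‖) :=
  tInf_c0_sum_general E F T A hA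
end
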